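/- arXiv:2406.07795 — 2 statements merged into one kernel-verified Lean document; each statement's English description precedes it below -/
import Mathlib

section
/- Let n be an even positive integer and r = n/2. Then overline{W(A_n)} = W(B_1), i.e. the top-left r×r submatrix of the walk matrix of the Dynkin graph A_n equals the walk matrix of the r×r divisor matrix B_1. -/
open Matrix

/-- The adjacency matrix of the Dynkin graph (path graph) `A_n`:
`A i j = 1` if `|i - j| = 1` and `0` otherwise (0-indexed). -/
def pathAdj (n : ℕ) : Matrix (Fin n) (Fin n) ℤ :=
  Matrix.of fun i j => if (i : ℕ) + 1 = (j : ℕ) ∨ (j : ℕ) + 1 = (i : ℕ) then 1 else 0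

/-- The walk matrix of a square matrix `M`: its `j`-th column (0-indexed)
is `M ^ j` applied to the all-ones vector. -/
def walkMatrix {m : ℕ} {R : Type*} [CommRing R] (M : Matrix (Fin m) (Fin m) R) :
    Matrix (Fin m) (Fin m) R :=
  Matrix.of fun i j => (M ^ (j : ℕ) *ᵥ fun _ => (1 : R)) i

/-- The divisor matrix `B₁` (0-indexed): `(B₁)_{i,i+1} = (B₁)_{i+1,i} = 1`,
`(B₁)_{r-1,r-1} = 1`, all other entries `0`. -/
def B1 (r : ℕ) : Matrix (Fin r) (Fin r) ℤ :=
  Matrix.of fun i j =>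
    if (i : ℕ) + 1 = (j : ℕ) ∨ (j : ℕ) + 1 = (i : ℕ) then 1
    else if (i : ℕ) = r - 1 ∧ (j : ℕ) = r - 1 then 1 else 0

lemma sum_ite_coe {n : ℕ} (u : Fin n → ℤ) (k : ℕ) :
    (∑ j : Fin n, if k = (j : ℕ) then u j else 0) = if h : k < n then u ⟨k, h⟩ else 0 := by
  split
  · next h =>
    rw [Finset.sum_eq_single (⟨k, h⟩ : Fin n)]
    · simp
    · intro b _ hb
      rw [if_neg]
      exact fun hc => hb (Fin.ext hc.symm)
    · simp
  · next h =>
    apply Finset.sum_eq_zero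
    intro j _
    rw [if_neg]
    have := j.isLt
    omega

lemma sum_ite_coe' {n : ℕ} (u : Fin n → ℤ) (k : ℕ) :
    (∑ j : Fin n, if (j : ℕ) + 1 = k then u j else 0) =
      if h : 0 < k ∧ k - 1 < n then u ⟨k - 1, h.2⟩ else 0 := by
  by_cases h1 : 0 < k
  · have : (∑ j : Fin n, if (j : ℕ) + 1 = k then u j else 0)
        = ∑ j : Fin n, if k - 1 = (j : ℕ) then u j else 0 := by
      apply Finset.sum_congr rfl; intro j _
      split_ifs <;> first | rfl | omega
    rw [this, sum_ite_coe]
    split_ifs <;> first | rfl | omega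
  · rw [dif_neg (by omega)]
    apply Finset.sum_eq_zero
    intro j _
    rw [if_neg (by omega)]

lemma pathAdj_mulVec {n : ℕ} (u : Fin n → ℤ) (i : Fin n) :
    (pathAdj n *ᵥ u) i =
      (if h : (i : ℕ) + 1 < n then u ⟨(i : ℕ) + 1, h⟩ else 0) +
      (if h : 0 < (i : ℕ) then u ⟨(i : ℕ) - 1, by omega⟩ else 0) := by
  have hsplit : ∀ j : Fin n,
      (if (i : ℕ) + 1 = (j : ℕ) ∨ (j : ℕ) + 1 = (i : ℕ) then (1:ℤ) else 0) * u j
        = (if (i : ℕ) + 1 = (j : ℕ) then u j else 0) + (if (j : ℕ) + 1 = (i : ℕ) then u j else 0) := by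
    intro j
    split_ifs <;> first | ring1 | (exfalso; omega)
  simp only [mulVec, dotProduct, pathAdj, of_apply]
  rw [Finset.sum_congr rfl (fun j _ => hsplit j), Finset.sum_add_distrib,
    sum_ite_coe, sum_ite_coe']
  congr 1
  split_ifs <;> first | rfl | omega

lemma B1_mulVec {r : ℕ} (v : Fin r → ℤ) (i : Fin r) :
    (B1 r *ᵥ v) i =
      (if h : (i : ℕ) + 1 < r then v ⟨(i : ℕ) + 1, h⟩ else 0) +
      (if h : 0 < (i : ℕ) then v ⟨(i : ℕ) - 1, by omega⟩ else 0) +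
      (if (i : ℕ) = r - 1 then v ⟨r - 1, by have := i.isLt; omega⟩ else 0) := by
  have hsplit : ∀ j : Fin r,
      (if (i : ℕ) + 1 = (j : ℕ) ∨ (j : ℕ) + 1 = (i : ℕ) then (1:ℤ)
        else if (i : ℕ) = r - 1 ∧ (j : ℕ) = r - 1 then 1 else 0) * v j
        = ((if (i : ℕ) + 1 = (j : ℕ) then v j else 0) + (if (j : ℕ) + 1 = (i : ℕ) then v j else 0))
          + (if (i : ℕ) = r - 1 then (if r - 1 = (j : ℕ) then v j else 0) else 0) := by
    intro j
    have hi := i.isLt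
    have hj := j.isLt
    split_ifs <;> first | ring1 | (exfalso; omega)
  simp only [mulVec, dotProduct, B1, of_apply]
  rw [Finset.sum_congr rfl (fun j _ => hsplit j), Finset.sum_add_distrib,
    Finset.sum_add_distrib, sum_ite_coe, sum_ite_coe']
  have hi := i.isLt
  congr 1
  · congr 1
    split_ifs <;> first | rfl | (exfalso; omega)
  · split_ifs with h
    · rw [sum_ite_coe, dif_pos (by omega)]
    · exact Finset.sum_const_zero

lemma B1_mulVec_mk {r : ℕ} (v : Fin r → ℤ) {k : ℕ} (hk : k < r) :
    (B1 r *ᵥ v) ⟨k, hk⟩ =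
      (if h : k + 1 < r then v ⟨k + 1, h⟩ else 0) +
      (if h : 0 < k then v ⟨k - 1, by omega⟩ else 0) +
      (if k = r - 1 then v ⟨r - 1, by omega⟩ else 0) :=
  B1_mulVec v ⟨k, hk⟩

/-- The symmetric "unfolding" of a vector on `Fin r` to a vector on `Fin n` (for `n = 2r`). -/
def unf (n r : ℕ) (v : Fin r → ℤ) : Fin n → ℤ := fun i =>
  if h : (i : ℕ) < r then v ⟨i, h⟩
  else if h2 : n - 1 - (i : ℕ) < r then v ⟨n - 1 - (i : ℕ), h2⟩ else 0

lemma unf_mk_lt {n r : ℕ} (v : Fin r → ℤ) {k : ℕ} (hk : k < n) (h : k < r) :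
    unf n r v ⟨k, hk⟩ = v ⟨k, h⟩ := dif_pos h

lemma unf_mk_ge {n r : ℕ} (v : Fin r → ℤ) {k : ℕ} (hk : k < n) (h : ¬ k < r)
    (h2 : n - 1 - k < r) : unf n r v ⟨k, hk⟩ = v ⟨n - 1 - k, h2⟩ := by
  simp only [unf]
  rw [dif_neg h, dif_pos h2]

lemma unf_lt' {n r : ℕ} (v : Fin r → ℤ) (i : Fin n) (h : (i : ℕ) < r) :
    unf n r v i = v ⟨(i : ℕ), h⟩ := dif_pos h

lemma unf_ge' {n r : ℕ} (v : Fin r → ℤ) (i : Fin n) (h : ¬ (i : ℕ) < r)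
    (h2 : n - 1 - (i : ℕ) < r) : unf n r v i = v ⟨n - 1 - (i : ℕ), h2⟩ := by
  simp only [unf]
  rw [dif_neg h, dif_pos h2]

set_option maxHeartbeats 1000000 in
/-- The unfolding intertwines the path adjacency matrix and the divisor matrix. -/
lemma key {n r : ℕ} (hr : 0 < r) (hn2 : n = 2 * r) (v : Fin r → ℤ) :
    pathAdj n *ᵥ unf n r v = unf n r (B1 r *ᵥ v) := by
  funext i
  have hi := i.isLt
  rw [pathAdj_mulVec]
  by_cases hk : (i : ℕ) < r
  · -- left half
    rw [unf_lt' _ i hk, B1_mulVec_mk v hk,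
      dif_pos (show (i : ℕ) + 1 < n by omega)]
    by_cases hk1 : (i : ℕ) + 1 < r
    · rw [unf_mk_lt _ _ hk1, dif_pos hk1, if_neg (show ¬ (i : ℕ) = r - 1 by omega), add_zero]
      by_cases hp : 0 < (i : ℕ)
      · rw [dif_pos hp, dif_pos hp, unf_mk_lt _ _ (show (i : ℕ) - 1 < r by omega)]
      · rw [dif_neg hp, dif_neg hp]
    · -- i = r - 1
      have hir : (i : ℕ) = r - 1 := by omega
      rw [unf_mk_ge _ _ (by omega) (by omega), dif_neg hk1, if_pos hir]
      have e1 : (⟨n - 1 - ((i : ℕ) + 1), by omega⟩ : Fin r) = ⟨r - 1, by omega⟩ := by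
        simp only [Fin.mk.injEq]; omega
      rw [e1]
      by_cases hp : 0 < (i : ℕ)
      · rw [dif_pos hp, dif_pos hp, unf_mk_lt _ _ (show (i : ℕ) - 1 < r by omega)]
        ring
      · rw [dif_neg hp, dif_neg hp]
        ring
  · -- right half
    have hm : n - 1 - (i : ℕ) < r := by omega
    have hp : 0 < (i : ℕ) := by omega
    rw [unf_ge' _ i hk hm, B1_mulVec_mk v hm,
      dif_pos hp]
    by_cases hir : (i : ℕ) = r
    · -- fold point: m = r - 1
      rw [unf_mk_lt _ _ (show (i : ℕ) - 1 < r by omega),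
        if_pos (show n - 1 - (i : ℕ) = r - 1 by omega),
        dif_neg (show ¬ (n - 1 - (i : ℕ)) + 1 < r by omega)]
      have e2 : (⟨(i : ℕ) - 1, by omega⟩ : Fin r) = ⟨r - 1, by omega⟩ := by
        simp only [Fin.mk.injEq]; omega
      rw [e2]
      by_cases h2r : (i : ℕ) + 1 < n
      · rw [dif_pos h2r, unf_mk_ge _ _ (by omega) (by omega),
          dif_pos (show 0 < n - 1 - (i : ℕ) by omega)]
        have e3 : (⟨n - 1 - ((i : ℕ) + 1), by omega⟩ : Fin r)
            = ⟨n - 1 - (i : ℕ) - 1, by omega⟩ := by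
          simp only [Fin.mk.injEq]; omega
        rw [e3]
        ring
      · rw [dif_neg h2r, dif_neg (show ¬ 0 < n - 1 - (i : ℕ) by omega)]
        ring
    · -- strictly right: i > r
      have him : r < (i : ℕ) := by omega
      rw [unf_mk_ge _ _ (by omega) (by omega),
        if_neg (show ¬ n - 1 - (i : ℕ) = r - 1 by omega),
        dif_pos (show (n - 1 - (i : ℕ)) + 1 < r by omega), add_zero]
      have e4 : (⟨n - 1 - ((i : ℕ) - 1), by omega⟩ : Fin r)
          = ⟨(n - 1 - (i : ℕ)) + 1, by omega⟩ := by
        simp only [Fin.mk.injEq]; omega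
      rw [e4]
      by_cases h2r : (i : ℕ) + 1 < n
      · rw [dif_pos h2r, unf_mk_ge _ _ (by omega) (by omega),
          dif_pos (show 0 < n - 1 - (i : ℕ) by omega)]
        have e5 : (⟨n - 1 - ((i : ℕ) + 1), by omega⟩ : Fin r)
            = ⟨n - 1 - (i : ℕ) - 1, by omega⟩ := by
          simp only [Fin.mk.injEq]; omega
        rw [e5]
        ring
      · rw [dif_neg h2r, dif_neg (show ¬ 0 < n - 1 - (i : ℕ) by omega)]
        ring

lemma unf_ones {n r : ℕ} (hr : 0 < r) (hn2 : n = 2 * r) :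
    unf n r (fun _ => (1 : ℤ)) = fun _ => (1 : ℤ) := by
  funext i
  have hi := i.isLt
  simp only [unf]
  split_ifs with h1 h2
  · rfl
  · rfl
  · omega

lemma key_pow {n r : ℕ} (hr : 0 < r) (hn2 : n = 2 * r) (j : ℕ) :
    (pathAdj n) ^ j *ᵥ (fun _ => (1 : ℤ)) = unf n r ((B1 r) ^ j *ᵥ fun _ => (1 : ℤ)) := by
  induction j with
  | zero => simp [Matrix.one_mulVec, unf_ones hr hn2]
  | succ j ih =>
    rw [pow_succ', ← mulVec_mulVec, ih, key hr hn2, pow_succ', ← mulVec_mulVec]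

/-- For even `n` with `r = n/2`, the top-left `r × r` submatrix of the walk
matrix of `A_n` equals the walk matrix of `B₁`. -/
theorem walkMatrixBar_eq_walkMatrix_B1 (n : ℕ) (hn : 0 < n) (he : Even n) :
    (walkMatrix (pathAdj n)).submatrix
        (Fin.castLE (show n / 2 ≤ n by omega)) (Fin.castLE (show n / 2 ≤ n by omega)) =
      walkMatrix (B1 (n / 2)) := by
  have hr : 0 < n / 2 := by
    rw [Nat.even_iff] at he; omega
  have hn2 : n = 2 * (n / 2) := by
    rw [Nat.even_iff] at he; omega
  ext i j
  simp only [submatrix_apply, walkMatrix, of_apply, Fin.coe_castLE]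
  rw [key_pow hr hn2 (j : ℕ)]
  rw [show (Fin.castLE (show n / 2 ≤ n by omega) i : Fin n) = ⟨(i : ℕ), by omega⟩ from rfl,
    unf_mk_lt _ _ i.isLt]
end

section
/- Let r be a positive integer and for 1 ≤ k ≤ r set α_k = 2kπ/(2r+1). Then ∏_{k=1}^{r} sin(r·α_k) = (−1)^{⌊r/2⌋} · ∏_{k=1}^{r} sin(α_k). -/
open Real

lemma sign_prod_aux (r : ℕ) :
    ∏ k ∈ Finset.Icc 1 r, (-1 : ℝ) ^ (k + 1) = (-1) ^ (r / 2) := by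
  induction r with
  | zero => simp
  | succ n ih =>
    rw [Finset.prod_Icc_succ_top (by omega), ih]
    rcases Nat.even_or_odd n with h | h
    · rcases h with ⟨m, hm⟩
      subst hm
      have h1 : (m + m + 1) / 2 = (m + m) / 2 := by omega
      rw [h1]
      have h2 : ((-1:ℝ)) ^ (m + m + 1 + 1) = 1 := Even.neg_one_pow ⟨m + 1, by ring⟩
      rw [h2, mul_one]
    · rcases h with ⟨m, hm⟩
      subst hm
      have h1 : (2 * m + 1 + 1) / 2 = (2 * m + 1) / 2 + 1 := by omega
      have h2 : ((-1:ℝ)) ^ (2 * m + 1 + 1 + 1) = -1 := Odd.neg_one_pow ⟨m + 1, by ring⟩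
      rw [h1, h2, pow_succ]

lemma reindex_aux (r : ℕ) :
    ∏ k ∈ Finset.Icc 1 r, Real.sin (2 * k * Real.pi / (2 * r + 1)) =
      ∏ k ∈ Finset.Icc 1 r, Real.sin (k * Real.pi / (2 * r + 1)) := by
  refine Finset.prod_nbij' (fun k => if 2 * k ≤ r then 2 * k else 2 * r + 1 - 2 * k)
    (fun m => if 2 ∣ m then m / 2 else (2 * r + 1 - m) / 2) ?_ ?_ ?_ ?_ ?_
  · intro a ha
    simp only [Finset.mem_Icc] at *
    split <;> omega
  · intro b hb
    simp only [Finset.mem_Icc] at *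
    split <;> omega
  · intro a ha
    simp only [Finset.mem_Icc] at ha
    by_cases h : 2 * a ≤ r
    · simp [h]
    · simp only [h, if_neg]
      have : ¬ (2 ∣ 2 * r + 1 - 2 * a) := by omega
      simp only [this, if_false]
      omega
  · intro b hb
    simp only [Finset.mem_Icc] at hb
    by_cases h : 2 ∣ b
    · simp only [h, if_pos]
      have : 2 * (b / 2) ≤ r := by omega
      simp only [this, if_true]
      omega
    · simp only [h, if_neg, if_false]
      have h2 : ¬ (2 * ((2 * r + 1 - b) / 2) ≤ r) := by omega
      simp only [h2, if_false]
      omega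
  · intro a ha
    simp only [Finset.mem_Icc] at ha
    by_cases h : 2 * a ≤ r
    · simp only [h, if_true]
      push_cast
      ring_nf
    · simp only [h, if_false]
      have hc : ((2 * r + 1 - 2 * a : ℕ) : ℝ) = 2 * r + 1 - 2 * a := by
        push_cast [Nat.cast_sub (by omega : 2 * a ≤ 2 * r + 1)]
        ring
      rw [hc]
      have : (2 * (r:ℝ) + 1 - 2 * a) * Real.pi / (2 * r + 1) =
          Real.pi - 2 * a * Real.pi / (2 * r + 1) := by
        have hN : (2 * (r:ℝ) + 1) ≠ 0 := by positivity
        field_simp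
      rw [this, Real.sin_pi_sub]

/-- With `α_k = 2kπ/(2r+1)`, one has
`∏_{k=1}^{r} sin(r α_k) = (−1)^{⌊r/2⌋} ∏_{k=1}^{r} sin(α_k)`. -/
theorem prod_sin_r_alpha (r : ℕ) (hr : 0 < r) :
    ∏ k ∈ Finset.Icc 1 r, Real.sin (r * (2 * k * Real.pi / (2 * r + 1))) =
      (-1) ^ (r / 2) * ∏ k ∈ Finset.Icc 1 r, Real.sin (2 * k * Real.pi / (2 * r + 1)) := by
  have hN : (2 * (r:ℝ) + 1) ≠ 0 := by positivity
  have key : ∀ k ∈ Finset.Icc 1 r,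
      Real.sin (r * (2 * k * Real.pi / (2 * r + 1))) =
        (-1 : ℝ) ^ (k + 1) * Real.sin (k * Real.pi / (2 * r + 1)) := by
    intro k hk
    have harg : (r:ℝ) * (2 * k * Real.pi / (2 * r + 1)) =
        k * Real.pi - k * Real.pi / (2 * r + 1) := by
      field_simp
      ring
    have hc : Real.cos (k * Real.pi) = (-1 : ℝ) ^ k := by
      simpa using Real.cos_add_nat_mul_pi 0 k
    rw [harg, Real.sin_sub, Real.sin_nat_mul_pi, hc]
    ring
  rw [Finset.prod_congr rfl key, Finset.prod_mul_distrib, sign_prod_aux, reindex_aux]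
end
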